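/- The algebraic Riccati equation has at most one solution: if K₁ and K₂ are positive semidefinite n×n matrices with K₁ = π(E[N₁ + A₁ᵀ K₁ A₁]) and K₂ = π(E[N₁ + A₁ᵀ K₂ A₁]), then K₁ = K₂. -/

import Mathlib

open MeasureTheory Matrix Filter ProbabilityTheory
open scoped ENNReal NNReal

noncomputable section

instance matrixMeasurableSpace {I J : Type*} : MeasurableSpace (Matrix I J ℝ) :=
  inferInstanceAs (MeasurableSpace (I → J → ℝ))

/-- The Schur-complement map `π(P) = P_xx − P_xu P_uu⁻¹ P_ux`. -/
def piMap {n m : ℕ} (P : Matrix (Fin n ⊕ Fin m) (Fin n ⊕ Fin m) ℝ) :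
    Matrix (Fin n) (Fin n) ℝ :=
  P.toBlocks₁₁ - P.toBlocks₁₂ * P.toBlocks₂₂⁻¹ * P.toBlocks₂₁

/-- The feedback-gain map `Γ(P) = −P_uu⁻¹ P_ux`. -/
def gammaMap {n m : ℕ} (P : Matrix (Fin n ⊕ Fin m) (Fin n ⊕ Fin m) ℝ) :
    Matrix (Fin m) (Fin n) ℝ :=
  -(P.toBlocks₂₂⁻¹ * P.toBlocks₂₁)

/-- Loewner order: `X ≤ Y` iff `Y - X` is positive semidefinite. -/
def loewnerLE {I : Type*} [Fintype I] (X Y : Matrix I I ℝ) : Prop :=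
  (Y - X).PosSemidef

/-- Spectral norm (`2`-norm) of a real matrix. -/
def specNorm {I J : Type*} [Fintype I] [Fintype J] [DecidableEq J]
    (M : Matrix I J ℝ) : ℝ :=
  ‖LinearMap.toContinuousLinearMap (Matrix.toEuclideanLin M)‖

/-- Entrywise expectation of a random matrix. -/
def matExp {Ω : Type*} [MeasurableSpace Ω] (μpr : Measure Ω) {I J : Type*}
    (M : Ω → Matrix I J ℝ) : Matrix I J ℝ :=
  Matrix.of fun i j => ∫ ω, M ω i j ∂μpr

section LQ

variable {n m : ℕ} {Ω : Type*} [MeasurableSpace Ω]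

/-- The filtration `𝓕_t = σ(A_s, N_s : 1 ≤ s ≤ t)` (with `𝓕_0` trivial). -/
def lqFiltration (A : ℕ → Ω → Matrix (Fin n) (Fin n ⊕ Fin m) ℝ)
    (N : ℕ → Ω → Matrix (Fin n ⊕ Fin m) (Fin n ⊕ Fin m) ℝ) :
    ℕ → MeasurableSpace Ω := fun t =>
  ⨆ s ∈ Finset.Icc 1 t, MeasurableSpace.comap (fun ω => (A s ω, N s ω)) inferInstance

/-- A control is admissible if it is adapted to the filtration. -/
def Admissible {k : ℕ} (F : ℕ → MeasurableSpace Ω) (u : ℕ → Ω → Fin k → ℝ) : Prop :=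
  ∀ t, @Measurable Ω (Fin k → ℝ) (F t) _ (u t)

/-- The state process `x_0 = x`, `x_{t+1} = A_{t+1} [x_t; u_t]`. -/
def statePath (A : ℕ → Ω → Matrix (Fin n) (Fin n ⊕ Fin m) ℝ)
    (x : Fin n → ℝ) (u : ℕ → Ω → Fin m → ℝ) : ℕ → Ω → Fin n → ℝ
  | 0 => fun _ => x
  | t + 1 => fun ω => A (t + 1) ω *ᵥ Sum.elim (statePath A x u t ω) (u t ω)

/-- The stage cost `[x_tᵀ, u_tᵀ] N_{t+1} [x_t; u_t]`. -/
def stageCost (A : ℕ → Ω → Matrix (Fin n) (Fin n ⊕ Fin m) ℝ)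
    (N : ℕ → Ω → Matrix (Fin n ⊕ Fin m) (Fin n ⊕ Fin m) ℝ)
    (x : Fin n → ℝ) (u : ℕ → Ω → Fin m → ℝ) (t : ℕ) (ω : Ω) : ℝ :=
  Sum.elim (statePath A x u t ω) (u t ω) ⬝ᵥ
    (N (t + 1) ω *ᵥ Sum.elim (statePath A x u t ω) (u t ω))

/-- The total cost `J(x, u) ∈ [0,∞]`. -/
def costJ (A : ℕ → Ω → Matrix (Fin n) (Fin n ⊕ Fin m) ℝ)
    (N : ℕ → Ω → Matrix (Fin n ⊕ Fin m) (Fin n ⊕ Fin m) ℝ)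
    (x : Fin n → ℝ) (u : ℕ → Ω → Fin m → ℝ) (ω : Ω) : ℝ≥0∞ :=
  ∑' t, ENNReal.ofReal (stageCost A N x u t ω)

/-- The value function `V(x) = inf over admissible u of E[J(x,u)]`. -/
def valueV (μpr : Measure Ω) (A : ℕ → Ω → Matrix (Fin n) (Fin n ⊕ Fin m) ℝ)
    (N : ℕ → Ω → Matrix (Fin n ⊕ Fin m) (Fin n ⊕ Fin m) ℝ)
    (x : Fin n → ℝ) : ℝ≥0∞ :=
  ⨅ (u : ℕ → Ω → Fin m → ℝ) (_ : Admissible (lqFiltration A N) u),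
    ∫⁻ ω, costJ A N x u ω ∂μpr

/-- The Riccati iteration `K_0 = O`, `K_{t+1} = π(E[N₁ + A₁ᵀ K_t A₁])`. -/
def Kseq (μpr : Measure Ω) (A : ℕ → Ω → Matrix (Fin n) (Fin n ⊕ Fin m) ℝ)
    (N : ℕ → Ω → Matrix (Fin n ⊕ Fin m) (Fin n ⊕ Fin m) ℝ) :
    ℕ → Matrix (Fin n) (Fin n) ℝ
  | 0 => 0
  | t + 1 => piMap (matExp μpr (fun ω => N 1 ω + (A 1 ω)ᵀ * Kseq μpr A N t * A 1 ω))

/-- The Q-learning process of Algorithm 1. -/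
def Qproc (A : ℕ → Ω → Matrix (Fin n) (Fin n ⊕ Fin m) ℝ)
    (N : ℕ → Ω → Matrix (Fin n ⊕ Fin m) (Fin n ⊕ Fin m) ℝ)
    (α : ℕ → Ω → ℝ) (Q0 : Matrix (Fin n ⊕ Fin m) (Fin n ⊕ Fin m) ℝ) :
    ℕ → Ω → Matrix (Fin n ⊕ Fin m) (Fin n ⊕ Fin m) ℝ
  | 0 => fun _ => Q0
  | t + 1 => fun ω =>
      Qproc A N α Q0 t ω + α t ω •
        (N (t + 1) ω + (A (t + 1) ω)ᵀ * piMap (Qproc A N α Q0 t ω) * A (t + 1) ω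
          - Qproc A N α Q0 t ω)

end LQ

/-!
Write `P(K) = E[N₁ + A₁ᵀ K A₁]` and `G_L = [I; L]`. Completing the square in the `u`-block gives
`G_Lᵀ P G_L = π(P) + (L - Γ(P))ᵀ P_uu (L - Γ(P))`, so `π(P)` is the minimum over gains `L`,
attained at `Γ(P)`. Freeze the gain `L = Γ(P(K₂))` that is optimal for `K₂`: with the positive
definite `C = G_Lᵀ E[N₁] G_L` and the positive linear map `T X = G_Lᵀ E[A₁ᵀ X A₁] G_L`, we get
`K₂ = C + T K₂` and `K₁ ≤ C + T K₁`. Hence `D = K₂ - K₁` satisfies `D ≥ Tᵗ D ≥ -r Tᵗ C` for some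
`r`, while `K₂ ≥ ∑_{s<t} Tˢ C` forces `Tᵗ C → 0`; so `K₁ ≤ K₂`, and `K₁ = K₂` by symmetry.
-/

open scoped MatrixOrder

section LoewnerOrder
open Finset Topology
variable {n : Type*} [Fintype n] [DecidableEq n]

lemma Matrix.PosDef.exists_neg_smul_le {C D : Matrix n n ℝ} (hC : C.PosDef)
    (hD : D.IsHermitian) : ∃ r : ℝ, -(r • C) ≤ D := by
  cases isEmpty_or_nonempty n
  · exact ⟨0, (Subsingleton.elim _ _).le⟩
  obtain ⟨c, hc, hcC⟩ := (CFC.exists_pos_algebraMap_le_iff hC.isHermitian).2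
    fun x hx => hC.isStrictlyPositive.spectrum_pos hx
  have := ContinuousFunctionalCalculus.compactSpace_spectrum (R := ℝ) (p := IsSelfAdjoint) D
  obtain ⟨s, hs⟩ := (isCompact_iff_compactSpace.2 this).bddBelow
  have hsD : algebraMap ℝ _ (min s 0) ≤ D :=
    algebraMap_le_of_le_spectrum (fun x hx => (min_le_left _ _).trans (hs hx)) hD
  refine ⟨-min s 0 / c, ?_⟩
  have hr : 0 ≤ -min s 0 / c := div_nonneg (by simp) hc.le
  calc -((-min s 0 / c) • C) ≤ -((-min s 0 / c) • algebraMap ℝ _ c) := by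
        rw [neg_le_neg_iff, ← sub_nonneg, ← smul_sub]
        exact (Matrix.le_iff.1 hcC).smul hr |>.nonneg
    _ = algebraMap ℝ _ (min s 0) := by
        rw [Algebra.smul_def, ← map_mul, div_mul_cancel₀ _ hc.ne', map_neg, neg_neg]
    _ ≤ D := hsD

omit [DecidableEq n] in
lemma Matrix.dotProduct_mulVec_mono {X Y : Matrix n n ℝ} (h : X ≤ Y) (x : n → ℝ) :
    x ⬝ᵥ X *ᵥ x ≤ x ⬝ᵥ Y *ᵥ x := by
  simpa [sub_mulVec, dotProduct_sub] using (Matrix.le_iff.1 h).dotProduct_mulVec_nonneg x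

omit [DecidableEq n] in
lemma Matrix.tendsto_dotProduct_mulVec_zero_of_sum_le {M : ℕ → Matrix n n ℝ} {K : Matrix n n ℝ}
    (hM : ∀ s, 0 ≤ M s) (hK : ∀ t, ∑ s ∈ range t, M s ≤ K) (x : n → ℝ) :
    Tendsto (fun s => x ⬝ᵥ M s *ᵥ x) atTop (𝓝 0) := by
  refine (summable_of_sum_range_le (c := x ⬝ᵥ K *ᵥ x) (fun s => ?_) fun t => ?_).tendsto_atTop_zero
  · simpa using dotProduct_mulVec_mono (hM s) x
  · simpa [sum_mulVec, dotProduct_sum] using dotProduct_mulVec_mono (hK t) x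

lemma Matrix.le_of_le_add_apply_of_eq_add_apply {T : Matrix n n ℝ →ₗ[ℝ] Matrix n n ℝ}
    (hT : Monotone T) {C K₁ K₂ : Matrix n n ℝ} (hC : C.PosDef) (hK₁ : K₁.IsHermitian)
    (hK₂ : 0 ≤ K₂) (h₁ : K₁ ≤ C + T K₁) (h₂ : K₂ = C + T K₂) : K₁ ≤ K₂ := by
  have hTpow (t : ℕ) : Monotone (T ^ t) := by
    rw [Module.End.coe_pow]; exact hT.iterate t
  set D := K₂ - K₁
  have hTD : T D ≤ D := calc
    T D = K₂ - (C + T K₁) := by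
      rw [map_sub, eq_sub_of_add_eq' h₂.symm]; abel
    _ ≤ D := sub_le_sub_left h₁ K₂
  have hpowD (t : ℕ) : (T ^ t) D ≤ D := by
    induction t with
    | zero => simp
    | succ t ih => rw [pow_succ, Module.End.mul_apply]; exact (hTpow t hTD).trans ih
  have hsum (t : ℕ) : ∑ s ∈ range t, (T ^ s) C ≤ K₂ := by
    have hexp : K₂ = ∑ s ∈ range t, (T ^ s) C + (T ^ t) K₂ := by
      induction t with
      | zero => simp
      | succ t ih =>
        rwa [sum_range_succ, add_assoc, pow_succ, Module.End.mul_apply, ← map_add, ← h₂]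
    calc ∑ s ∈ range t, (T ^ s) C ≤ ∑ s ∈ range t, (T ^ s) C + (T ^ t) K₂ :=
          le_add_of_nonneg_right (by simpa using hTpow t hK₂)
      _ = K₂ := hexp.symm
  obtain ⟨r, hr⟩ := hC.exists_neg_smul_le (hK₂.posSemidef.isHermitian.sub hK₁)
  rw [← sub_nonneg]
  refine PosSemidef.nonneg <| .of_dotProduct_mulVec_nonneg (hK₂.posSemidef.isHermitian.sub hK₁)
    fun x => ?_
  have hlim := (tendsto_dotProduct_mulVec_zero_of_sum_le
    (fun s => by simpa using hTpow s hC.posSemidef.nonneg) hsum x).const_mul (-r)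
  rw [mul_zero] at hlim
  refine le_of_tendsto hlim (Eventually.of_forall fun t => ?_)
  calc -r * (x ⬝ᵥ (T ^ t) C *ᵥ x) = x ⬝ᵥ (T ^ t) (-(r • C)) *ᵥ x := by
        simp [neg_mulVec, smul_mulVec, dotProduct_neg]
    _ ≤ x ⬝ᵥ (T ^ t) D *ᵥ x := dotProduct_mulVec_mono (hTpow t hr) x
    _ ≤ star x ⬝ᵥ D *ᵥ x := by simpa using dotProduct_mulVec_mono (hpowD t) x

end LoewnerOrder

section Schur
variable {n m : ℕ}

def graphMatrix (L : Matrix (Fin m) (Fin n) ℝ) : Matrix (Fin n ⊕ Fin m) (Fin n) ℝ :=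
  fromRows 1 L

lemma graphMatrix_conj_eq_piMap_add {P : Matrix (Fin n ⊕ Fin m) (Fin n ⊕ Fin m) ℝ}
    (hP : P.IsHermitian) (h22 : IsUnit P.toBlocks₂₂) (L : Matrix (Fin m) (Fin n) ℝ) :
    (graphMatrix L)ᵀ * P * graphMatrix L =
      piMap P + (L - gammaMap P)ᵀ * P.toBlocks₂₂ * (L - gammaMap P) := by
  have hsym : Pᵀ = P := by rwa [← conjTranspose_eq_transpose_of_trivial]
  have h21 : P.toBlocks₂₁ = P.toBlocks₁₂ᵀ := by
    ext i j; exact (congrFun₂ hsym (Sum.inr i) (Sum.inl j)).symm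
  have hunit : IsUnit P.toBlocks₂₂.det := (isUnit_iff_isUnit_det _).1 h22
  have hinv : P.toBlocks₂₂⁻¹ᵀ = P.toBlocks₂₂⁻¹ := by
    rw [transpose_nonsing_inv]; congr 1; ext i j; exact congrFun₂ hsym (Sum.inr i) (Sum.inr j)
  unfold graphMatrix
  nth_rewrite 1 [← fromBlocks_toBlocks P]
  rw [Matrix.mul_assoc, fromBlocks_mul_fromRows, transpose_fromRows, fromCols_mul_fromRows]
  simp only [piMap, gammaMap, sub_neg_eq_add, transpose_add, transpose_mul, hinv, h21,
    transpose_transpose, transpose_one, Matrix.one_mul, Matrix.mul_one, Matrix.add_mul,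
    Matrix.mul_add, Matrix.mul_assoc, mul_nonsing_inv_cancel_left _ _ hunit,
    nonsing_inv_mul_cancel_left _ _ hunit]
  abel

lemma graphMatrix_gammaMap_conj {P : Matrix (Fin n ⊕ Fin m) (Fin n ⊕ Fin m) ℝ}
    (hP : P.IsHermitian) (h22 : IsUnit P.toBlocks₂₂) :
    (graphMatrix (gammaMap P))ᵀ * P * graphMatrix (gammaMap P) = piMap P := by
  simp [graphMatrix_conj_eq_piMap_add hP h22]

lemma piMap_le_graphMatrix_conj {P : Matrix (Fin n ⊕ Fin m) (Fin n ⊕ Fin m) ℝ}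
    (hP : P.IsHermitian) (h22 : P.toBlocks₂₂.PosDef) (L : Matrix (Fin m) (Fin n) ℝ) :
    piMap P ≤ (graphMatrix L)ᵀ * P * graphMatrix L := by
  rw [graphMatrix_conj_eq_piMap_add hP h22.isUnit, le_add_iff_nonneg_right]
  simpa using (h22.posSemidef.conjTranspose_mul_mul_same (L - gammaMap P)).nonneg

lemma Matrix.PosDef.graphMatrix_conj {P : Matrix (Fin n ⊕ Fin m) (Fin n ⊕ Fin m) ℝ}
    (hP : P.PosDef) (L : Matrix (Fin m) (Fin n) ℝ) :
    ((graphMatrix L)ᵀ * P * graphMatrix L).PosDef := by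
  rw [← conjTranspose_eq_transpose_of_trivial]
  refine hP.conjTranspose_mul_mul_same fun x y hxy => ?_
  funext i
  simpa [graphMatrix, fromRows_mulVec] using congrFun hxy (Sum.inl i)

lemma Matrix.PosDef.toBlocks₂₂ {P : Matrix (Fin n ⊕ Fin m) (Fin n ⊕ Fin m) ℝ} (hP : P.PosDef) :
    P.toBlocks₂₂.PosDef :=
  hP.submatrix Sum.inr_injective

end Schur

section Expectation
variable {Ω : Type*} [MeasurableSpace Ω] {μ : Measure Ω} {ι κ : Type*}

lemma matExp_add {F G : Ω → Matrix ι κ ℝ} (hF : ∀ i j, Integrable (fun ω => F ω i j) μ)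
    (hG : ∀ i j, Integrable (fun ω => G ω i j) μ) :
    matExp μ (fun ω => F ω + G ω) = matExp μ F + matExp μ G := by
  ext i j
  exact integral_add (hF i j) (hG i j)

lemma matExp_smul (r : ℝ) (F : Ω → Matrix ι κ ℝ) :
    matExp μ (fun ω => r • F ω) = r • matExp μ F := by
  ext i j
  exact integral_const_mul r _

lemma dotProduct_mulVec_matExp [Fintype ι] {F : Ω → Matrix ι ι ℝ}
    (hF : ∀ i j, Integrable (fun ω => F ω i j) μ) (x : ι → ℝ) :
    x ⬝ᵥ matExp μ F *ᵥ x = ∫ ω, x ⬝ᵥ F ω *ᵥ x ∂μ := by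
  simp only [dotProduct, mulVec, Finset.mul_sum]
  rw [integral_finsetSum _ fun i _ => integrable_finsetSum _ fun j _ =>
    ((hF i j).mul_const _).const_mul _]
  refine Finset.sum_congr rfl fun i _ => ?_
  rw [integral_finsetSum _ fun j _ => ((hF i j).mul_const _).const_mul _]
  refine Finset.sum_congr rfl fun j _ => ?_
  rw [integral_const_mul, integral_mul_const]
  rfl

lemma matExp_nonneg [Fintype ι] {F : Ω → Matrix ι ι ℝ} (hF0 : ∀ ω, 0 ≤ F ω)
    (hF : ∀ i j, Integrable (fun ω => F ω i j) μ) : 0 ≤ matExp μ F := by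
  refine PosSemidef.nonneg <| .of_dotProduct_mulVec_nonneg ?_ fun x => ?_
  · ext i j
    exact integral_congr_ae <| ae_of_all _ fun ω => (hF0 ω).posSemidef.isHermitian.apply i j
  · simpa [dotProduct_mulVec_matExp hF] using
      integral_nonneg fun ω => by simpa using (hF0 ω).posSemidef.dotProduct_mulVec_nonneg x

variable [Fintype κ]

def expectedCongr (μ : Measure Ω) (A : Ω → Matrix κ ι ℝ)
    (hA : ∀ (X : Matrix κ κ ℝ) i j, Integrable (fun ω => ((A ω)ᵀ * X * A ω) i j) μ) :
    Matrix κ κ ℝ →ₗ[ℝ] Matrix ι ι ℝ where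
  toFun X := matExp μ fun ω => (A ω)ᵀ * X * A ω
  map_add' X Y := by
    simpa only [Matrix.mul_add, Matrix.add_mul] using matExp_add (hA X) (hA Y)
  map_smul' r X := by
    simpa only [Matrix.mul_smul, Matrix.smul_mul, RingHom.id_apply] using matExp_smul r _

lemma expectedCongr_monotone [Fintype ι] (A : Ω → Matrix κ ι ℝ)
    (hA : ∀ (X : Matrix κ κ ℝ) i j, Integrable (fun ω => ((A ω)ᵀ * X * A ω) i j) μ) :
    Monotone (expectedCongr μ A hA) := fun X Y hXY => by
  rw [← sub_nonneg, ← map_sub]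
  refine matExp_nonneg (fun ω => ?_) (hA _)
  simpa using ((sub_nonneg.2 hXY).posSemidef.conjTranspose_mul_mul_same (A ω)).nonneg

end Expectation

section Congruence
variable {ι κ : Type*} [Fintype κ]

def congrLinearMap (E : Matrix κ ι ℝ) : Matrix κ κ ℝ →ₗ[ℝ] Matrix ι ι ℝ where
  toFun X := Eᵀ * X * E
  map_add' X Y := by rw [Matrix.mul_add, Matrix.add_mul]
  map_smul' r X := by rw [Matrix.mul_smul, Matrix.smul_mul]; rfl

lemma congrLinearMap_apply (E : Matrix κ ι ℝ) (X : Matrix κ κ ℝ) :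
    congrLinearMap E X = Eᵀ * X * E := rfl

lemma congrLinearMap_monotone [Fintype ι] (E : Matrix κ ι ℝ) : Monotone (congrLinearMap E) :=
  fun X Y hXY => by
    rw [← sub_nonneg, ← map_sub, congrLinearMap_apply, ← conjTranspose_eq_transpose_of_trivial]
    exact ((sub_nonneg.2 hXY).posSemidef.conjTranspose_mul_mul_same E).nonneg

end Congruence

section SpecNorm
open scoped Matrix.Norms.L2Operator
variable {ι κ : Type*} [Fintype ι] [Fintype κ] [DecidableEq κ]

lemma specNorm_eq_l2_opNorm (M : Matrix ι κ ℝ) : specNorm M = ‖M‖ := rfl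

lemma abs_apply_le_specNorm (M : Matrix ι κ ℝ) (i : ι) (j : κ) : |M i j| ≤ specNorm M := by
  have h := M.l2_opNorm_mulVec (EuclideanSpace.single j 1)
  rw [PiLp.norm_single, norm_one, mul_one] at h
  rw [specNorm_eq_l2_opNorm]
  refine le_trans ?_ ((PiLp.norm_apply_le _ i).trans h)
  simp [mulVec_single]

lemma specNorm_transpose_mul_mul_le [DecidableEq ι] (A : Matrix κ ι ℝ) (X : Matrix κ κ ℝ) :
    specNorm (Aᵀ * X * A) ≤ specNorm X * specNorm (Aᵀ * A) := by
  simp only [specNorm_eq_l2_opNorm, ← conjTranspose_eq_transpose_of_trivial,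
    l2_opNorm_conjTranspose_mul_self]
  calc ‖Aᴴ * X * A‖ ≤ ‖Aᴴ‖ * ‖X‖ * ‖A‖ :=
        (l2_opNorm_mul _ _).trans (mul_le_mul_of_nonneg_right (l2_opNorm_mul _ _) (norm_nonneg _))
    _ = ‖X‖ * (‖A‖ * ‖A‖) := by rw [l2_opNorm_conjTranspose]; ring

variable {Ω : Type*} [MeasurableSpace Ω] {μ : Measure Ω}

lemma integrable_apply_of_specNorm_le {F : Ω → Matrix ι κ ℝ} (hF : Measurable F) {g : Ω → ℝ}
    (hg : Integrable g μ) (hFg : ∀ ω, specNorm (F ω) ≤ g ω) (i : ι) (j : κ) :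
    Integrable (fun ω => F ω i j) μ :=
  hg.mono' (hF.eval.eval).aestronglyMeasurable
    (ae_of_all _ fun ω => (abs_apply_le_specNorm _ i j).trans (hFg ω))

end SpecNorm


section Moments
variable {Ω ι κ : Type*} [MeasurableSpace Ω] [Fintype ι] [Fintype κ]

lemma Measurable.transpose_mul_mul {A : Ω → Matrix κ ι ℝ} (hA : Measurable A)
    (X : Matrix κ κ ℝ) : Measurable fun ω => (A ω)ᵀ * X * A ω := by
  have : BorelSpace (Matrix κ ι ℝ) := inferInstanceAs (BorelSpace (κ → ι → ℝ))
  have : BorelSpace (Matrix ι ι ℝ) := inferInstanceAs (BorelSpace (ι → ι → ℝ))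
  exact (by fun_prop : Continuous fun M : Matrix κ ι ℝ => Mᵀ * X * M).measurable.comp hA

variable {μ : Measure Ω} [IsFiniteMeasure μ] [DecidableEq ι] [DecidableEq κ]

lemma integrable_apply_of_integrable_specNorm_sq {A : Ω → Matrix κ ι ℝ} {N : Ω → Matrix ι ι ℝ}
    (hA : Measurable A) (hN : Measurable N)
    (hmom : Integrable (fun ω => specNorm (N ω) ^ 2 + specNorm ((A ω)ᵀ * A ω) ^ 2) μ) :
    (∀ i j, Integrable (fun ω => N ω i j) μ) ∧
      ∀ (X : Matrix κ κ ℝ) i j, Integrable (fun ω => ((A ω)ᵀ * X * A ω) i j) μ := by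
  have hg : Integrable (fun ω => 1 + (specNorm (N ω) ^ 2 + specNorm ((A ω)ᵀ * A ω) ^ 2)) μ :=
    (integrable_const 1).add hmom
  refine ⟨integrable_apply_of_specNorm_le hN hg fun ω => ?_, fun X =>
    integrable_apply_of_specNorm_le (hA.transpose_mul_mul X) (hg.const_mul (specNorm X))
      fun ω => (specNorm_transpose_mul_mul_le _ _).trans
        (mul_le_mul_of_nonneg_left ?_ (norm_nonneg _))⟩
  · nlinarith [sq_nonneg (specNorm (N ω) - 1), sq_nonneg (specNorm ((A ω)ᵀ * A ω))]
  · nlinarith [sq_nonneg (specNorm ((A ω)ᵀ * A ω) - 1), sq_nonneg (specNorm (N ω))]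

end Moments

section Riccati
variable {n m : ℕ} {Ω : Type*} [MeasurableSpace Ω] {μ : Measure Ω}
  {A : Ω → Matrix (Fin n) (Fin n ⊕ Fin m) ℝ} {N : Ω → Matrix (Fin n ⊕ Fin m) (Fin n ⊕ Fin m) ℝ}

lemma riccati_solution_le (hN : ∀ i j, Integrable (fun ω => N ω i j) μ)
    (hA : ∀ (X : Matrix (Fin n) (Fin n) ℝ) i j, Integrable (fun ω => ((A ω)ᵀ * X * A ω) i j) μ)
    (hEN : (matExp μ N).PosDef) {K₁ K₂ : Matrix (Fin n) (Fin n) ℝ} (hK₁ : 0 ≤ K₁) (hK₂ : 0 ≤ K₂)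
    (h₁ : K₁ = piMap (matExp μ fun ω => N ω + (A ω)ᵀ * K₁ * A ω))
    (h₂ : K₂ = piMap (matExp μ fun ω => N ω + (A ω)ᵀ * K₂ * A ω)) : K₁ ≤ K₂ := by
  set M := expectedCongr μ A hA
  have hP (K : Matrix (Fin n) (Fin n) ℝ) :
      (matExp μ fun ω => N ω + (A ω)ᵀ * K * A ω) = matExp μ N + M K :=
    matExp_add hN (hA K)
  have hPpos {K : Matrix (Fin n) (Fin n) ℝ} (hK : 0 ≤ K) : (matExp μ N + M K).PosDef := by
    have hMK : 0 ≤ M K := by simpa using expectedCongr_monotone A hA hK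
    exact hEN.add_posSemidef hMK.posSemidef
  rw [hP] at h₁ h₂
  set E := graphMatrix (gammaMap (matExp μ N + M K₂))
  have hsplit (K : Matrix (Fin n) (Fin n) ℝ) :
      Eᵀ * (matExp μ N + M K) * E = Eᵀ * matExp μ N * E + (congrLinearMap E ∘ₗ M) K := by
    rw [Matrix.mul_add, Matrix.add_mul]; rfl
  refine le_of_le_add_apply_of_eq_add_apply (T := congrLinearMap E ∘ₗ M)
    ((congrLinearMap_monotone E).comp (expectedCongr_monotone A hA))
    (hEN.graphMatrix_conj (gammaMap (matExp μ N + M K₂)))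
    hK₁.posSemidef.isHermitian hK₂ ?_ ?_
  · calc K₁ = _ := h₁
      _ ≤ Eᵀ * (matExp μ N + M K₁) * E :=
        piMap_le_graphMatrix_conj (hPpos hK₁).isHermitian (hPpos hK₁).toBlocks₂₂ _
      _ = _ := hsplit K₁
  · rw [← hsplit, graphMatrix_gammaMap_conj (hPpos hK₂).isHermitian (hPpos hK₂).toBlocks₂₂.isUnit]
    exact h₂

end Riccati

theorem ARE_unique_general
    {n m : ℕ} {Ω : Type*} [MeasurableSpace Ω]
    (μpr : Measure Ω) [IsProbabilityMeasure μpr]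
    (A : ℕ → Ω → Matrix (Fin n) (Fin n ⊕ Fin m) ℝ)
    (N : ℕ → Ω → Matrix (Fin n ⊕ Fin m) (Fin n ⊕ Fin m) ℝ)
    (hmeas : ∀ t : ℕ, Measurable fun ω => (A (t + 1) ω, N (t + 1) ω))
    (hmom : Integrable
      (fun ω => specNorm (N 1 ω) ^ 2 + specNorm ((A 1 ω)ᵀ * A 1 ω) ^ 2) μpr)
    (hENpos : (matExp μpr (N 1)).PosDef)
    (K₁ K₂ : Matrix (Fin n) (Fin n) ℝ) (hK₁ : K₁.PosSemidef) (hK₂ : K₂.PosSemidef)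
    (hsol₁ : K₁ = piMap (matExp μpr (fun ω => N 1 ω + (A 1 ω)ᵀ * K₁ * A 1 ω)))
    (hsol₂ : K₂ = piMap (matExp μpr (fun ω => N 1 ω + (A 1 ω)ᵀ * K₂ * A 1 ω))) :
    K₁ = K₂ := by
  obtain ⟨hN, hA⟩ :=
    integrable_apply_of_integrable_specNorm_sq (hmeas 0).fst (hmeas 0).snd hmom
  exact le_antisymm (riccati_solution_le hN hA hENpos hK₁.nonneg hK₂.nonneg hsol₁ hsol₂)
    (riccati_solution_le hN hA hENpos hK₂.nonneg hK₁.nonneg hsol₂ hsol₁)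

/-- The algebraic Riccati equation has at most one psd solution. -/
theorem ARE_unique
    {n m : ℕ} {Ω : Type*} [MeasurableSpace Ω]
    (μpr : Measure Ω) [IsProbabilityMeasure μpr]
    (A : ℕ → Ω → Matrix (Fin n) (Fin n ⊕ Fin m) ℝ)
    (N : ℕ → Ω → Matrix (Fin n ⊕ Fin m) (Fin n ⊕ Fin m) ℝ)
    (hmeas : ∀ t : ℕ, Measurable fun ω => (A (t + 1) ω, N (t + 1) ω))
    (hindep : ProbabilityTheory.iIndepFun
      (fun (t : ℕ) (ω : Ω) => (A (t + 1) ω, N (t + 1) ω)) μpr)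
    (hident : ∀ t : ℕ, ProbabilityTheory.IdentDistrib
      (fun ω => (A (t + 1) ω, N (t + 1) ω)) (fun ω => (A 1 ω, N 1 ω)) μpr μpr)
    (hNpsd : ∀ (t : ℕ) (ω : Ω), (N (t + 1) ω).PosSemidef)
    (hmom : Integrable
      (fun ω => specNorm (N 1 ω) ^ 2 + specNorm ((A 1 ω)ᵀ * A 1 ω) ^ 2) μpr)
    (hENpos : (matExp μpr (N 1)).PosDef)
    (K₁ K₂ : Matrix (Fin n) (Fin n) ℝ) (hK₁ : K₁.PosSemidef) (hK₂ : K₂.PosSemidef)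
    (hsol₁ : K₁ = piMap (matExp μpr (fun ω => N 1 ω + (A 1 ω)ᵀ * K₁ * A 1 ω)))
    (hsol₂ : K₂ = piMap (matExp μpr (fun ω => N 1 ω + (A 1 ω)ᵀ * K₂ * A 1 ω))) :
    K₁ = K₂ :=
  ARE_unique_general μpr A N hmeas hmom hENpos K₁ K₂ hK₁ hK₂ hsol₁ hsol₂

end
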